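/- arXiv:1309.2729 — 4 statements merged into one kernel-verified Lean document; each statement's English description precedes it below -/
import Mathlib

section
/- The minimum of the function f(a,b) = (2+b)·a/(2+a) over all a ≥ 0 and b ∈ [0,1] subject to the constraint (1/4)·a·(−b² + 2b + 1) = 1 equals (3+√5)/4, and this minimum is attained at a = (2/3)·(2+√5) and b = √5 − 2. -/
theorem stmt_4 :
    IsLeast {z : ℝ | ∃ a b : ℝ, 0 ≤ a ∧ b ∈ Set.Icc (0:ℝ) 1 ∧
        (1/4) * a * (-b^2 + 2*b + 1) = 1 ∧ z = (2 + b) * a / (2 + a)}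
      ((3 + Real.sqrt 5) / 4) ∧
    (let a₀ : ℝ := (2/3) * (2 + Real.sqrt 5)
     let b₀ : ℝ := Real.sqrt 5 - 2
     0 ≤ a₀ ∧ b₀ ∈ Set.Icc (0:ℝ) 1 ∧ (1/4) * a₀ * (-b₀^2 + 2*b₀ + 1) = 1 ∧
       (2 + b₀) * a₀ / (2 + a₀) = (3 + Real.sqrt 5) / 4) := by
  have hs2 : Real.sqrt 5 ^ 2 = 5 := Real.sq_sqrt (by norm_num)
  have hs_lb : (2:ℝ) ≤ Real.sqrt 5 := by
    nlinarith [Real.sqrt_nonneg 5, hs2]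
  have hs_ub : Real.sqrt 5 ≤ 3 := by
    nlinarith [Real.sqrt_nonneg 5, hs2]
  set s := Real.sqrt 5 with hsdef
  have hmem : (0:ℝ) ≤ (2/3) * (2 + s) ∧ (s - 2) ∈ Set.Icc (0:ℝ) 1 ∧
      (1/4) * ((2/3) * (2 + s)) * (-(s-2)^2 + 2*(s-2) + 1) = 1 ∧
      (2 + (s-2)) * ((2/3) * (2 + s)) / (2 + (2/3) * (2 + s)) = (3 + s) / 4 := by
    refine ⟨by linarith, ⟨by linarith, by linarith⟩, by nlinarith, ?_⟩
    rw [div_eq_div_iff (by linarith) (by norm_num)]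
    nlinarith
  constructor
  · constructor
    · exact ⟨(2/3) * (2 + s), s - 2, hmem.1, hmem.2.1, hmem.2.2.1, hmem.2.2.2.symm⟩
    · rintro z ⟨a, b, ha, ⟨hb0, hb1⟩, hc, rfl⟩
      rw [div_le_div_iff₀ (by norm_num) (by linarith)]
      nlinarith [mul_nonneg ha (sq_nonneg (b - (s - 2))), hc, sq_nonneg (b - (s-2))]
  · exact hmem
end

section
/- For b = 2√3 − 3, the function g(b) = 2·(1 + b/3) / (3/2 + (2/3)·b − (1/6)·b²) attains its minimum over b ∈ [0,1], and the minimum value is (10 + 4√3)/13. -/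
theorem stmt_5 :
    let g : ℝ → ℝ := fun b => 2 * (1 + b/3) / (3/2 + (2/3)*b - (1/6)*b^2)
    let b₀ : ℝ := 2 * Real.sqrt 3 - 3
    b₀ ∈ Set.Icc (0:ℝ) 1 ∧ g b₀ = (10 + 4 * Real.sqrt 3) / 13 ∧
      ∀ b ∈ Set.Icc (0:ℝ) 1, g b₀ ≤ g b := by
  intro g b₀
  have hs2 : Real.sqrt 3 ^ 2 = 3 := Real.sq_sqrt (by norm_num)
  have hs : (1.7:ℝ) < Real.sqrt 3 := by nlinarith [Real.sqrt_nonneg 3]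
  have hs' : Real.sqrt 3 < 1.8 := by nlinarith [Real.sqrt_nonneg 3]
  refine ⟨⟨by simp only [b₀]; nlinarith, by simp only [b₀]; nlinarith⟩, ?_, ?_⟩
  · show 2 * (1 + b₀/3) / (3/2 + (2/3)*b₀ - (1/6)*b₀^2) = (10 + 4 * Real.sqrt 3) / 13
    have hden : 3/2 + (2/3)*b₀ - (1/6)*b₀^2 = (10 * Real.sqrt 3 - 12)/3 := by
      simp only [b₀]; ring_nf; nlinarith
    rw [hden]
    rw [div_eq_div_iff (by nlinarith) (by norm_num)]
    simp only [b₀]; nlinarith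
  · intro b hb
    obtain ⟨hb0, hb1⟩ := hb
    have hDb : (0:ℝ) < 3/2 + (2/3)*b - (1/6)*b^2 := by nlinarith
    have hD0 : (0:ℝ) < 3/2 + (2/3)*b₀ - (1/6)*b₀^2 := by simp only [b₀]; nlinarith
    show 2 * (1 + b₀/3) / (3/2 + (2/3)*b₀ - (1/6)*b₀^2) ≤ 2 * (1 + b/3) / (3/2 + (2/3)*b - (1/6)*b^2)
    rw [div_le_div_iff₀ hD0 hDb]
    simp only [b₀]
    nlinarith [sq_nonneg (b - (2*Real.sqrt 3 - 3)), sq_nonneg (b*Real.sqrt 3 - (2*Real.sqrt 3 - 3)*Real.sqrt 3)]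
end

section
/- Let 𝒟 be a finite type and let ρ : 𝒟 × 𝒟 → ℝ be of the form ρ(a,b) = Σ_{s=1}^{r} α_s · p_s(a) · p_s(b), where α_s ≥ 0, Σ_s α_s = 1, p_s(a) ≥ 0 and Σ_a p_s(a) = 1 for each s. Then for every k ≥ 2 there exists a probability distribution over 𝒟^k (i.e., random variables X₁,…,X_k) such that for every pair i ≠ j, the joint distribution of (X_i, X_j) equals ρ. -/
theorem stmt_9 {D : Type*} [Fintype D] [DecidableEq D]
    (r : ℕ) (α : Fin r → ℝ) (p : Fin r → D → ℝ)
    (hα : ∀ s, 0 ≤ α s) (hαsum : ∑ s, α s = 1)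
    (hp : ∀ s a, 0 ≤ p s a) (hpsum : ∀ s, ∑ a, p s a = 1)
    (ρ : D × D → ℝ) (hρ : ∀ a b, ρ (a, b) = ∑ s, α s * (p s a * p s b)) :
    ∀ k : ℕ, 2 ≤ k →
      ∃ μ : (Fin k → D) → ℝ, (∀ x, 0 ≤ μ x) ∧ (∑ x, μ x = 1) ∧
        ∀ i j : Fin k, i ≠ j → ∀ a b : D,
          (∑ x : Fin k → D, if x i = a ∧ x j = b then μ x else 0) = ρ (a, b) := by
  intro k hk
  refine ⟨fun x => ∑ s, α s * ∏ l, p s (x l), ?_, ?_, ?_⟩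
  · intro x
    exact Finset.sum_nonneg fun s _ =>
      mul_nonneg (hα s) (Finset.prod_nonneg fun l _ => hp s (x l))
  · rw [Finset.sum_comm]
    calc ∑ s, ∑ x : Fin k → D, α s * ∏ l, p s (x l)
        = ∑ s, α s * ∑ x : Fin k → D, ∏ l, p s (x l) := by
          simp [Finset.mul_sum]
      _ = 1 := by
          have : ∀ s, (∑ x : Fin k → D, ∏ l, p s (x l)) = 1 := by
            intro s
            rw [← Fintype.prod_sum (fun (_ : Fin k) (c : D) => p s c)]
            simp [hpsum s]
          simp [this, hαsum]
  · intro i j hij a b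
    rw [hρ]
    have key : ∀ s : Fin r,
        (∑ x : Fin k → D, if x i = a ∧ x j = b then ∏ l, p s (x l) else 0)
        = p s a * p s b := by
      intro s
      set g : Fin k → D → ℝ := fun l c =>
        if l = i then (if c = a then p s c else 0)
        else if l = j then (if c = b then p s c else 0)
        else p s c with hg
      have h1 : ∀ x : Fin k → D,
          (if x i = a ∧ x j = b then ∏ l, p s (x l) else 0) = ∏ l, g l (x l) := by
        intro x
        by_cases hx : x i = a ∧ x j = b
        · rw [if_pos hx]
          refine Finset.prod_congr rfl fun l _ => ?_
          simp only [hg]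
          by_cases hli : l = i
          · subst hli; simp [hx.1]
          · by_cases hlj : l = j
            · subst hlj; simp [hli, hx.2]
            · simp [hli, hlj]
        · rw [if_neg hx]
          rcases not_and_or.mp hx with h | h
          · refine (Finset.prod_eq_zero (Finset.mem_univ i) ?_).symm
            simp [hg, h]
          · refine (Finset.prod_eq_zero (Finset.mem_univ j) ?_).symm
            simp [hg, h, hij.symm]
      rw [Finset.sum_congr rfl fun x _ => h1 x, ← Fintype.prod_sum g]
      have h2 : ∀ l, (∑ c, g l c) =
          if l = i then p s a else if l = j then p s b else 1 := by
        intro l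
        simp only [hg]
        by_cases hli : l = i
        · simp [hli, Finset.sum_ite_eq' Finset.univ a (p s)]
        · by_cases hlj : l = j
          · simp [hli, hlj, Finset.sum_ite_eq' Finset.univ b (p s)]
          · simp [hli, hlj, hpsum s]
      rw [Finset.prod_congr rfl fun l _ => h2 l]
      rw [← Finset.mul_prod_erase Finset.univ _ (Finset.mem_univ i)]
      have hji : j ∈ Finset.univ.erase i := by simp [hij.symm]
      rw [← Finset.mul_prod_erase _ _ hji]
      have : ∏ l ∈ (Finset.univ.erase i).erase j,
          (if l = i then p s a else if l = j then p s b else 1) = 1 := by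
        refine Finset.prod_eq_one fun l hl => ?_
        simp only [Finset.mem_erase] at hl
        simp [hl.1, hl.2.1]
      simp [this, hij.symm]
    calc (∑ x : Fin k → D, if x i = a ∧ x j = b then ∑ s, α s * ∏ l, p s (x l) else 0)
        = ∑ x : Fin k → D, ∑ s, (if x i = a ∧ x j = b then α s * ∏ l, p s (x l) else 0) := by
          refine Finset.sum_congr rfl fun x _ => ?_
          split <;> simp
      _ = ∑ s, ∑ x : Fin k → D, (if x i = a ∧ x j = b then α s * ∏ l, p s (x l) else 0) :=
          Finset.sum_comm
      _ = ∑ s, α s * (p s a * p s b) := by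
          refine Finset.sum_congr rfl fun s _ => ?_
          rw [← key s, Finset.mul_sum]
          refine Finset.sum_congr rfl fun x _ => ?_
          split <;> simp
end

section
/- Let 𝒟 be a finite type and ρ : 𝒟 × 𝒟 → ℝ a probability distribution that is pairwise realizable (i.e., for every k there exist random variables X₁,…,X_k with each pair (X_i,X_j), i ≠ j, distributed according to ρ). Then ρ is a convex combination of symmetric product distributions: ρ(a,b) = Σ_s α_s p_s(a) p_s(b) with α_s ≥ 0, Σ α_s = 1, p_s(a) ≥ 0, Σ_a p_s(a) = 1. -/
/-!
The symmetric products `p ⊗ p`, `p` in the simplex, form a compact set, so by Carathéodory their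
convex hull is compact. If `ρ` lay outside it, a continuous functional `f` would separate them:
`f (p ⊗ p) ≤ u < f ρ`. Take `k` samples whose pairs of distinct coordinates are `ρ`-distributed.
The expected sum of `f` over the `k (k - 1)` ordered pairs of distinct coordinates is
`k (k - 1) f ρ`, while for every outcome `x` it equals `k² f (pₓ ⊗ pₓ)` minus the `k` diagonal
terms, `pₓ` being the empirical distribution of `x`. Hence `k (k - 1) f ρ ≤ k² u + k ‖f‖`, which
fails for large `k`.
-/

open Finset

section CompactConvexHull

variable {E : Type*} [AddCommGroup E] [Module ℝ E]

def convexCombinations (s : Set E) (m : ℕ) : Set E :=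
  (fun wz : (Fin m → ℝ) × (Fin m → E) => ∑ i, wz.1 i • wz.2 i) ''
    (stdSimplex ℝ (Fin m) ×ˢ Set.univ.pi fun _ => s)

theorem convexCombinations_subset_convexHull (s : Set E) (m : ℕ) :
    convexCombinations s m ⊆ convexHull ℝ s := by
  rintro _ ⟨⟨w, z⟩, ⟨hw, hz⟩, rfl⟩
  exact (convex_convexHull ℝ s).sum_mem (fun i _ => hw.1 i) hw.2
    fun i _ => subset_convexHull ℝ s (hz i (Set.mem_univ i))

theorem exists_fin_of_mem_convexHull_image {β : Type*} {g : β → E} {t : Set β} {x : E}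
    (hx : x ∈ convexHull ℝ (g '' t)) :
    ∃ (r : ℕ) (α : Fin r → ℝ) (p : Fin r → β), (∀ s, 0 ≤ α s) ∧ ∑ s, α s = 1 ∧
      (∀ s, p s ∈ t) ∧ ∑ s, α s • g (p s) = x := by
  obtain ⟨ι, _, w, z, hw0, hw1, hz, rfl⟩ := mem_convexHull_iff_exists_fintype.1 hx
  choose p hpt hpz using hz
  let e := Fintype.equivFin ι
  refine ⟨_, w ∘ e.symm, p ∘ e.symm, fun s => hw0 _, ?_, fun s => hpt _, ?_⟩
  · rwa [Function.comp_def, e.symm.sum_comp w]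
  · simp only [Function.comp_apply, hpz]
    exact e.symm.sum_comp fun i => w i • z i

theorem IsCompact.convexCombinations [TopologicalSpace E] [ContinuousAdd E]
    [ContinuousSMul ℝ E] {s : Set E} (hs : IsCompact s) (m : ℕ) :
    IsCompact (convexCombinations s m) :=
  ((isCompact_stdSimplex ℝ (Fin m)).prod (isCompact_univ_pi fun _ => hs)).image
    (by fun_prop)

theorem convexHull_subset_biUnion_convexCombinations [FiniteDimensional ℝ E] (s : Set E) :
    convexHull ℝ s ⊆ ⋃ m ∈ Set.Iic (Module.finrank ℝ E + 1), convexCombinations s m := by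
  intro x hx
  obtain ⟨ι, _, z, w, hzs, hz, hw0, hw1, rfl⟩ := eq_pos_convex_span_of_mem_convexHull hx
  have hcard : Fintype.card ι ≤ Module.finrank ℝ E + 1 :=
    hz.card_le_finrank_succ.trans (Nat.succ_le_succ (Submodule.finrank_le _))
  let e := Fintype.equivFin ι
  refine Set.mem_biUnion hcard ⟨(w ∘ e.symm, z ∘ e.symm), ⟨⟨fun i => (hw0 _).le, ?_⟩, ?_⟩, ?_⟩
  · rwa [Function.comp_def, e.symm.sum_comp w]
  · exact fun i _ => hzs (Set.mem_range_self _)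
  · exact e.symm.sum_comp fun i => w i • z i

theorem IsCompact.convexHull [TopologicalSpace E] [ContinuousAdd E] [ContinuousSMul ℝ E]
    [FiniteDimensional ℝ E] {s : Set E} (hs : IsCompact s) : IsCompact (convexHull ℝ s) := by
  have hunion : _root_.convexHull ℝ s =
      ⋃ m ∈ Set.Iic (Module.finrank ℝ E + 1), _root_.convexCombinations s m :=
    (convexHull_subset_biUnion_convexCombinations s).antisymm
      (Set.iUnion₂_subset fun m _ => convexCombinations_subset_convexHull s m)
  rw [hunion]
  exact (Set.finite_Iic _).isCompact_biUnion fun m _ => hs.convexCombinations m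

end CompactConvexHull

section PairwiseRealizable

variable {D : Type*}

def symmProd (p : D → ℝ) : D × D → ℝ := fun q => p q.1 * p q.2

theorem continuous_symmProd : Continuous (symmProd (D := D)) := by
  unfold symmProd; fun_prop

theorem symmProd_smul (c : ℝ) (p : D → ℝ) : symmProd (c • p) = c ^ 2 • symmProd p := by
  ext q; simp only [symmProd, Pi.smul_apply, smul_eq_mul]; ring

theorem isCompact_convexHull_symmProd_stdSimplex [Fintype D] :
    IsCompact (convexHull ℝ (symmProd '' stdSimplex ℝ D)) :=
  ((isCompact_stdSimplex ℝ D).image continuous_symmProd).convexHull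

section Counting

variable [DecidableEq D] {k : ℕ}

def occurrenceCount (x : Fin k → D) (a : D) : ℝ := ∑ i, if x i = a then 1 else 0

def diagPairCount (x : Fin k → D) (q : D × D) : ℝ := ∑ i, if x i = q.1 ∧ x i = q.2 then 1 else 0

def offDiagPairCount (x : Fin k → D) (q : D × D) : ℝ :=
  ∑ i, ∑ j ∈ univ.erase i, if x i = q.1 ∧ x j = q.2 then 1 else 0

def HasPairMarginal [Fintype D] (μ : (Fin k → D) → ℝ) (ρ : D × D → ℝ) : Prop :=
  ∀ i j : Fin k, i ≠ j → ∀ a b : D,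
    (∑ x : Fin k → D, if x i = a ∧ x j = b then μ x else 0) = ρ (a, b)

theorem offDiagPairCount_eq (x : Fin k → D) :
    offDiagPairCount x = symmProd (occurrenceCount x) - diagPairCount x := by
  ext ⟨a, b⟩
  simp only [offDiagPairCount, symmProd, occurrenceCount, diagPairCount, Pi.sub_apply,
    sum_mul_sum, ite_zero_mul_ite_zero, mul_one]
  rw [eq_sub_iff_add_eq, ← sum_add_distrib]
  exact sum_congr rfl fun i _ => sum_erase_add _ _ (mem_univ i)

theorem norm_diagPairCount_le [Fintype D] (x : Fin k → D) : ‖diagPairCount x‖ ≤ k := by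
  refine pi_norm_le_iff_of_nonneg (Nat.cast_nonneg k) |>.2 fun q => ?_
  calc ‖diagPairCount x q‖ ≤ ∑ i : Fin k, ‖(if x i = q.1 ∧ x i = q.2 then 1 else 0 : ℝ)‖ :=
        norm_sum_le _ _
    _ ≤ ∑ _i : Fin k, (1 : ℝ) := sum_le_sum fun i _ => by split_ifs <;> simp
    _ = k := by simp

theorem inv_smul_occurrenceCount_mem_stdSimplex [Fintype D] (hk : k ≠ 0) (x : Fin k → D) :
    (k : ℝ)⁻¹ • occurrenceCount x ∈ stdSimplex ℝ D := by
  simp only [stdSimplex, Set.mem_ofPred_eq, Pi.smul_apply, smul_eq_mul, ← mul_sum,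
    occurrenceCount]
  refine ⟨fun a => mul_nonneg (by positivity) (sum_nonneg fun i _ => ?_), ?_⟩
  · split_ifs <;> norm_num
  rw [sum_comm]
  simp [hk]

theorem sum_smul_offDiagPairCount [Fintype D] {μ : (Fin k → D) → ℝ} {ρ : D × D → ℝ}
    (hμ : HasPairMarginal μ ρ) : ∑ x, μ x • offDiagPairCount x = ((k : ℝ) * (k - 1)) • ρ := by
  ext ⟨a, b⟩
  simp only [Finset.sum_apply, Pi.smul_apply, smul_eq_mul, offDiagPairCount, mul_sum, mul_ite,
    mul_one, mul_zero]
  rw [sum_comm]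
  simp_rw [sum_comm (s := univ (α := Fin k → D))]
  rw [sum_congr rfl fun i _ => sum_congr rfl fun j hj => hμ i j (ne_of_mem_erase hj).symm a b]
  rcases k with _ | k
  · simp
  · simp [card_erase_of_mem]
    ring

theorem apply_offDiagPairCount_le [Fintype D] (f : StrongDual ℝ (D × D → ℝ)) {u : ℝ}
    (hf : ∀ p ∈ stdSimplex ℝ D, f (symmProd p) ≤ u) (hk : k ≠ 0) (x : Fin k → D) :
    f (offDiagPairCount x) ≤ k ^ 2 * u + k * ‖f‖ := by
  have hsymm : symmProd (occurrenceCount x) =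
      (k : ℝ) ^ 2 • symmProd ((k : ℝ)⁻¹ • occurrenceCount x) := by
    rw [symmProd_smul, smul_smul, ← mul_pow, mul_inv_cancel₀ (by exact_mod_cast hk), one_pow,
      one_smul]
  have hdiag : -f (diagPairCount x) ≤ k * ‖f‖ :=
    calc -f (diagPairCount x) ≤ ‖f‖ * ‖diagPairCount x‖ := (neg_le_abs _).trans (f.le_opNorm _)
      _ ≤ ‖f‖ * k := mul_le_mul_of_nonneg_left (norm_diagPairCount_le x) (norm_nonneg f)
      _ = k * ‖f‖ := mul_comm _ _
  have hempirical := mul_le_mul_of_nonneg_left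
    (hf _ (inv_smul_occurrenceCount_mem_stdSimplex hk x)) (sq_nonneg (k : ℝ))
  rw [offDiagPairCount_eq, map_sub, hsymm, map_smul, smul_eq_mul]
  linarith

theorem mul_sub_one_mul_apply_le [Fintype D] (f : StrongDual ℝ (D × D → ℝ)) {u : ℝ}
    (hf : ∀ p ∈ stdSimplex ℝ D, f (symmProd p) ≤ u) (hk : k ≠ 0) {μ : (Fin k → D) → ℝ}
    {ρ : D × D → ℝ} (hμ0 : ∀ x, 0 ≤ μ x) (hμ1 : ∑ x, μ x = 1) (hμ : HasPairMarginal μ ρ) :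
    k * (k - 1) * f ρ ≤ k ^ 2 * u + k * ‖f‖ :=
  calc k * (k - 1) * f ρ = ∑ x, μ x * f (offDiagPairCount x) := by
        rw [← smul_eq_mul, ← map_smul, ← sum_smul_offDiagPairCount hμ, map_sum]
        simp only [map_smul, smul_eq_mul]
    _ ≤ ∑ x, μ x * (k ^ 2 * u + k * ‖f‖) :=
        sum_le_sum fun x _ =>
          mul_le_mul_of_nonneg_left (apply_offDiagPairCount_le f hf hk x) (hμ0 x)
    _ = k ^ 2 * u + k * ‖f‖ := by rw [← sum_mul, hμ1, one_mul]

end Counting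

theorem mem_convexHull_symmProd_of_forall_hasPairMarginal [Fintype D] [DecidableEq D]
    {ρ : D × D → ℝ} (hreal : ∀ k : ℕ, ∃ μ : (Fin k → D) → ℝ,
      (∀ x, 0 ≤ μ x) ∧ (∑ x, μ x = 1) ∧ HasPairMarginal μ ρ) :
    ρ ∈ convexHull ℝ (symmProd '' stdSimplex ℝ D) := by
  by_contra hρ
  obtain ⟨f, u, hfu, hρu⟩ := geometric_hahn_banach_closed_point (convex_convexHull ℝ _)
    isCompact_convexHull_symmProd_stdSimplex.isClosed hρ
  have hf : ∀ p ∈ stdSimplex ℝ D, f (symmProd p) ≤ u := fun p hp =>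
    (hfu _ (subset_convexHull ℝ _ ⟨p, hp, rfl⟩)).le
  obtain ⟨N, hN⟩ := exists_nat_gt ((‖f‖ + f ρ) / (f ρ - u))
  obtain ⟨μ, hμ0, hμ1, hμ⟩ := hreal (N + 1)
  have hbound := mul_sub_one_mul_apply_le f hf N.succ_ne_zero hμ0 hμ1 hμ
  rw [div_lt_iff₀ (sub_pos.2 hρu)] at hN
  push_cast at hbound
  nlinarith

end PairwiseRealizable

theorem stmt_10_general {D : Type*} [Fintype D] [DecidableEq D]
    (ρ : D × D → ℝ)
    (hreal : ∀ k : ℕ,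
      ∃ μ : (Fin k → D) → ℝ, (∀ x, 0 ≤ μ x) ∧ (∑ x, μ x = 1) ∧
        ∀ i j : Fin k, i ≠ j → ∀ a b : D,
          (∑ x : Fin k → D, if x i = a ∧ x j = b then μ x else 0) = ρ (a, b)) :
    ∃ (r : ℕ) (α : Fin r → ℝ) (p : Fin r → D → ℝ),
      (∀ s, 0 ≤ α s) ∧ (∑ s, α s = 1) ∧
      (∀ s a, 0 ≤ p s a) ∧ (∀ s, ∑ a, p s a = 1) ∧
      ∀ a b, ρ (a, b) = ∑ s, α s * (p s a * p s b) := by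
  obtain ⟨r, α, p, hα0, hα1, hp, hρ⟩ :=
    exists_fin_of_mem_convexHull_image (mem_convexHull_symmProd_of_forall_hasPairMarginal hreal)
  refine ⟨r, α, p, hα0, hα1, fun s => (hp s).1, fun s => (hp s).2, fun a b => ?_⟩
  rw [← hρ, Finset.sum_apply]
  rfl

theorem stmt_10 {D : Type*} [Fintype D] [DecidableEq D]
    (ρ : D × D → ℝ) (hρ0 : ∀ q, 0 ≤ ρ q) (hρ1 : ∑ q : D × D, ρ q = 1)
    (hreal : ∀ k : ℕ,
      ∃ μ : (Fin k → D) → ℝ, (∀ x, 0 ≤ μ x) ∧ (∑ x, μ x = 1) ∧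
        ∀ i j : Fin k, i ≠ j → ∀ a b : D,
          (∑ x : Fin k → D, if x i = a ∧ x j = b then μ x else 0) = ρ (a, b)) :
    ∃ (r : ℕ) (α : Fin r → ℝ) (p : Fin r → D → ℝ),
      (∀ s, 0 ≤ α s) ∧ (∑ s, α s = 1) ∧
      (∀ s a, 0 ≤ p s a) ∧ (∀ s, ∑ a, p s a = 1) ∧
      ∀ a b, ρ (a, b) = ∑ s, α s * (p s a * p s b) :=
  stmt_10_general ρ hreal
end
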